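/- arXiv:2405.19728 — 5 statements merged into one kernel-verified Lean document; each statement's English description precedes it below -/
import Mathlib

section
/- Let p be an odd prime, and let b, c, b' be integers with p ∤ c and c·b' ≡ b (mod p). Then the Legendre symbol (D_p(b,c²)/p) equals (c/p)^((p−1)/2) · (D_p(b',1)/p). -/
open Polynomial

/-- `Dp p b c` is the determinant of the `(p-1) × (p-1)` matrix whose `(i,j)` entry
(for `1 ≤ i, j ≤ p-1`) is `(i² + b·i·j + c·j²)^(p-2)`. -/
def Dp (p : ℕ) (b c : ℤ) : ℤ :=
  Matrix.det (Matrix.of fun i j : Fin (p - 1) =>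
    (((i : ℕ) + 1 : ℤ) ^ 2 + b * ((i : ℕ) + 1 : ℤ) * ((j : ℕ) + 1 : ℤ)
      + c * ((j : ℕ) + 1 : ℤ) ^ 2) ^ (p - 2))

section Helpers

open Equiv Equiv.Perm

lemma sign_mulLeft_gen {G : Type*} [Group G] [Fintype G] [DecidableEq G]
    (g : G) (hg : ∀ x : G, x ∈ Subgroup.zpowers g) (hcard : 2 ≤ Fintype.card G)
    (heven : Even (Fintype.card G)) :
    Equiv.Perm.sign (Equiv.mulLeft g) = -1 := by
  have hg1 : g ≠ 1 := by
    rintro rfl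
    have hall : ∀ x : G, x = 1 := by
      intro x
      obtain ⟨k, hk⟩ := Subgroup.mem_zpowers_iff.mp (hg x)
      simpa using hk.symm
    have h1 : Fintype.card G ≤ 1 :=
      Fintype.card_le_one_iff.mpr fun a b => by rw [hall a, hall b]
    omega
  have hcyc : (Equiv.mulLeft g : Perm G).IsCycle := by
    refine ⟨1, by simpa using hg1, ?_⟩
    intro y hy
    obtain ⟨k, hk⟩ := Subgroup.mem_zpowers_iff.mp (hg y)
    exact ⟨k, by simp [Equiv.zpow_mulLeft, hk]⟩
  have hsupp : (Equiv.mulLeft g : Perm G).support = Finset.univ := by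
    ext x
    simp [Equiv.Perm.mem_support, hg1]
  rw [hcyc.sign, hsupp, Finset.card_univ, heven.neg_one_pow]

lemma zolotarev {p : ℕ} [Fact p.Prime] (hodd : p % 2 = 1) (u : (ZMod p)ˣ) :
    Equiv.Perm.sign (Equiv.mulLeft u) = if IsSquare u then 1 else -1 := by
  have hp2 : 2 < p := by
    have := (Fact.out : p.Prime).two_le
    omega
  have hcard : Fintype.card (ZMod p)ˣ = p - 1 := ZMod.card_units p
  obtain ⟨g, hg⟩ := IsCyclic.exists_generator (α := (ZMod p)ˣ)
  have hsign : Equiv.Perm.sign (Equiv.mulLeft g) = -1 :=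
    sign_mulLeft_gen g hg (by rw [hcard]; omega) (by rw [hcard]; exact ⟨(p-1)/2, by omega⟩)
  obtain ⟨k, hk⟩ : ∃ k : ℕ, g ^ k = u := by
    have h := hg u
    rwa [← (isOfFinOrder_of_finite g).mem_powers_iff_mem_zpowers,
      Submonoid.mem_powers_iff] at h
  have horder : orderOf g = p - 1 := by
    rw [orderOf_eq_card_of_forall_mem_zpowers hg, Nat.card_eq_fintype_card, hcard]
  have hsu : Equiv.Perm.sign (Equiv.mulLeft u) = (-1) ^ k := by
    rw [← hk, ← Equiv.pow_mulLeft, map_pow, hsign]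
  have hiff : IsSquare u ↔ Even k := by
    constructor
    · rintro ⟨x, hx⟩
      obtain ⟨m, hm⟩ : ∃ m : ℕ, g ^ m = x := by
        have h := hg x
        rwa [← (isOfFinOrder_of_finite g).mem_powers_iff_mem_zpowers,
          Submonoid.mem_powers_iff] at h
      have hpow : g ^ k = g ^ (2 * m) := by
        rw [hk, hx, ← hm, two_mul, pow_add]
      rw [pow_eq_pow_iff_modEq, horder] at hpow
      have hdvd : ((p : ℤ) - 1) ∣ (2 * m : ℤ) - k := by
        have := hpow.dvd
        push_cast at this ⊢
        convert this using 2
        omega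
      have h2 : (2 : ℤ) ∣ ((p : ℤ) - 1) := by omega
      have h3 := h2.trans hdvd
      rw [Nat.even_iff]
      omega
    · rintro ⟨m, rfl⟩
      exact ⟨g ^ m, by rw [← hk, ← pow_add]⟩
  by_cases hsq : IsSquare u
  · rw [if_pos hsq, hsu, (hiff.mp hsq).neg_one_pow]
  · rw [if_neg hsq, hsu, (Nat.not_even_iff_odd.mp (fun h => hsq (hiff.mpr h))).neg_one_pow]

lemma legendre_congr {p : ℕ} [Fact p.Prime] {x y : ℤ} (h : (x : ZMod p) = (y : ZMod p)) :
    legendreSym p x = legendreSym p y := by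
  unfold legendreSym
  rw [h]

end Helpers

theorem sheWu_case_three (p : ℕ) [Fact p.Prime] (hodd : p % 2 = 1) (b c b' : ℤ)
    (hc : ¬ (p : ℤ) ∣ c) (hb' : (p : ℤ) ∣ (c * b' - b)) :
    legendreSym p (Dp p b (c ^ 2)) =
      legendreSym p c ^ ((p - 1) / 2) * legendreSym p (Dp p b' 1) := by
  have hp : p.Prime := Fact.out
  have hp2 : 2 < p := by have := hp.two_le; omega
  have hc0 : (c : ZMod p) ≠ 0 := by
    rw [Ne, ZMod.intCast_zmod_eq_zero_iff_dvd]; exact hc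
  set cu : (ZMod p)ˣ := Units.mk0 (c : ZMod p) hc0 with hcu
  have hlt : ∀ i : Fin (p - 1), (i : ℕ) + 1 < p := fun i => by have := i.2; omega
  have hcop : ∀ i : Fin (p - 1), Nat.Coprime ((i : ℕ) + 1) p := by
    intro i
    exact Nat.coprime_comm.mp (hp.coprime_iff_not_dvd.mpr (fun hdvd => by
      have h1 := Nat.le_of_dvd (by omega) hdvd
      have h2 := hlt i
      omega))
  set f : Fin (p - 1) → (ZMod p)ˣ := fun i => ZMod.unitOfCoprime ((i : ℕ) + 1) (hcop i)
    with hfdef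
  have hf : ∀ i, (f i : ZMod p) = (((i : ℕ) + 1 : ℕ) : ZMod p) := fun i =>
    ZMod.coe_unitOfCoprime _ _
  have hinj : Function.Injective f := by
    intro i j hij
    have h : (((i : ℕ) + 1 : ℕ) : ZMod p) = (((j : ℕ) + 1 : ℕ) : ZMod p) := by
      rw [← hf i, ← hf j, hij]
    have h2 := congrArg ZMod.val h
    rw [ZMod.val_cast_of_lt (hlt i), ZMod.val_cast_of_lt (hlt j)] at h2
    exact Fin.ext (by omega)
  have hcardu : Fintype.card (ZMod p)ˣ = p - 1 := ZMod.card_units p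
  set e : Fin (p - 1) ≃ (ZMod p)ˣ :=
    Equiv.ofBijective f ((Fintype.bijective_iff_injective_and_card f).mpr
      ⟨hinj, by simp [hcardu]⟩) with hedef
  have he : ∀ i, (e i : ZMod p) = (((i : ℕ) + 1 : ℕ) : ZMod p) := hf
  -- casting the determinants to `ZMod p`
  have castD : ∀ β γ : ℤ, ((Dp p β γ : ℤ) : ZMod p) =
      Matrix.det (Matrix.of fun u v : (ZMod p)ˣ =>
        ((u : ZMod p) ^ 2 + (β : ZMod p) * (u : ZMod p) * (v : ZMod p)
          + (γ : ZMod p) * (v : ZMod p) ^ 2) ^ (p - 2)) := by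
    intro β γ
    have h1 : ((Dp p β γ : ℤ) : ZMod p) = (Int.castRingHom (ZMod p)) (Dp p β γ) := rfl
    rw [h1, Dp, RingHom.map_det, ← Matrix.det_submatrix_equiv_self e]
    congr 1
    ext i j
    simp only [Matrix.map_apply, Matrix.submatrix_apply, Matrix.of_apply, RingHom.mapMatrix_apply,
      he, map_pow, map_add, map_mul, map_pow, Int.coe_castRingHom]
    push_cast
    ring
  have hB : (c : ZMod p) * (b' : ZMod p) = (b : ZMod p) := by
    have h := (ZMod.intCast_zmod_eq_zero_iff_dvd _ p).mpr hb'
    push_cast at h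
    linear_combination h
  set σ : Equiv.Perm (ZMod p)ˣ := Equiv.mulLeft cu with hσ
  have hdet : ((Dp p b (c ^ 2) : ℤ) : ZMod p) =
      ((Equiv.Perm.sign σ : ℤ) : ZMod p) * ((Dp p b' 1 : ℤ) : ZMod p) := by
    rw [castD b (c ^ 2), castD b' 1]
    have hmat : (Matrix.of fun u v : (ZMod p)ˣ =>
        ((u : ZMod p) ^ 2 + (b : ZMod p) * (u : ZMod p) * (v : ZMod p)
          + ((c ^ 2 : ℤ) : ZMod p) * (v : ZMod p) ^ 2) ^ (p - 2))
        = (Matrix.of fun u v : (ZMod p)ˣ =>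
        ((u : ZMod p) ^ 2 + (b' : ZMod p) * (u : ZMod p) * (v : ZMod p)
          + ((1 : ℤ) : ZMod p) * (v : ZMod p) ^ 2) ^ (p - 2)).submatrix id σ := by
      ext u v
      simp only [Matrix.submatrix_apply, Matrix.of_apply, id]
      have hσv : ((σ v : (ZMod p)ˣ) : ZMod p) = (c : ZMod p) * (v : ZMod p) := by
        simp [hσ, hcu]
      rw [hσv, ← hB]
      push_cast
      ring
    rw [hmat, Matrix.det_permute']
  rcases legendreSym.eq_one_or_neg_one p (a := c) hc0 with h1 | h1
  · have hsq : IsSquare (c : ZMod p) := (legendreSym.eq_one_iff p hc0).mp h1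
    have hsqu : IsSquare cu := by
      obtain ⟨d, hd⟩ := hsq
      have hd0 : d ≠ 0 := fun h => hc0 (by rw [hd, h, mul_zero])
      exact ⟨Units.mk0 d hd0, Units.ext (by simp [hcu, hd])⟩
    have hsgn : Equiv.Perm.sign σ = 1 := by rw [hσ, zolotarev hodd cu, if_pos hsqu]
    have hcast : ((Dp p b (c ^ 2) : ℤ) : ZMod p) = ((Dp p b' 1 : ℤ) : ZMod p) := by
      rw [hdet, hsgn]
      push_cast
      ring
    rw [h1, one_pow, one_mul]
    exact legendre_congr hcast
  · have hsq : ¬ IsSquare (c : ZMod p) := fun h => by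
      rw [(legendreSym.eq_one_iff p hc0).mpr h] at h1
      norm_num at h1
    have hsqu : ¬ IsSquare cu := fun hs => by
      obtain ⟨r, hr⟩ := hs
      exact hsq ⟨(r : ZMod p), by rw [← Units.val_mul, ← hr, hcu, Units.val_mk0]⟩
    have hsgn : Equiv.Perm.sign σ = -1 := by rw [hσ, zolotarev hodd cu, if_neg hsqu]
    have hcast : ((Dp p b (c ^ 2) : ℤ) : ZMod p) = (((-1) * Dp p b' 1 : ℤ) : ZMod p) := by
      rw [hdet, hsgn]
      push_cast
      ring
    rw [legendre_congr hcast, legendreSym.mul, h1]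
    congr 1
    rw [legendreSym.at_neg_one (by omega), ZMod.χ₄_eq_neg_one_pow hodd]
    congr 1
    omega
end

section
/- Let p be a prime with p ≡ 1 (mod 4), and let b be an integer with Legendre symbol ((b²−4)/p) = −1. Then v_k(−b,1) ≢ 0 (mod p) for every positive integer k. -/
/-!
Let `α, β` be the roots of `X² + bX + 1` in an algebraic closure of `𝔽_p`, so that
`v_k(-b, 1) ≡ α^k + β^k` and `αβ = 1`. Since `(α - β)² = b² - 4` is a non-residue, Euler's
criterion gives `(α - β)^p = -(α - β)`, i.e. Frobenius swaps the roots: `α^p = β`, hence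
`α^(p+1) = 1`. If `p ∣ v_k`, then `α^(2k) = -α^k β^k = -1`; raising this to the odd power
`(p+1)/2` gives `-1 = (α^(p+1))^k = 1`, impossible in odd characteristic.
-/

open Polynomial

/-- Companion Lucas sequence: `v 0 = 2`, `v 1 = A`, `v (n+2) = A·v (n+1) − B·v n`. -/
def lucasV (A B : ℤ) : ℕ → ℤ
  | 0 => 2
  | 1 => A
  | n + 2 => A * lucasV A B (n + 1) - B * lucasV A B n

theorem lucasV_intCast_eq_pow_add_pow {R : Type*} [CommRing R] {A B : ℤ} {α β : R}
    (hsum : α + β = A) (hprod : α * β = B) : ∀ n, (lucasV A B n : R) = α ^ n + β ^ n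
  | 0 => by norm_num [lucasV]
  | 1 => by simp [lucasV, hsum]
  | n + 2 => by
    rw [lucasV, Int.cast_sub, Int.cast_mul, Int.cast_mul, ← hsum, ← hprod,
      lucasV_intCast_eq_pow_add_pow hsum hprod (n + 1),
      lucasV_intCast_eq_pow_add_pow hsum hprod n]
    ring

theorem IsAlgClosed.exists_add_eq_and_mul_eq {K : Type*} [Field K] [IsAlgClosed K] (s t : K) :
    ∃ α β : K, α + β = s ∧ α * β = t := by
  obtain ⟨α, hα⟩ := IsAlgClosed.exists_root (X ^ 2 - C s * X + C t)
    (ne_of_eq_of_ne (by compute_degree!) (by decide : (2 : WithBot ℕ) ≠ 0))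
  refine ⟨α, s - α, by ring, ?_⟩
  simp only [IsRoot, eval_add, eval_sub, eval_mul, eval_pow, eval_X, eval_C] at hα
  linear_combination -hα

theorem legendreSym.prime_ne_two_of_eq_neg_one {p : ℕ} [Fact p.Prime] {a : ℤ}
    (h : legendreSym p a = -1) : p ≠ 2 := by
  rintro rfl
  exact (legendreSym.eq_neg_one_iff 2).mp h
    (FiniteField.isSquare_of_char_two (ZMod.ringChar_zmod_n 2) _)

section CharP

variable {R : Type*} [CommRing R] (p : ℕ) [Fact p.Prime] [CharP R p]

theorem intCast_pow_char (a : ℤ) : (a : R) ^ p = a := by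
  simpa only [map_pow, map_intCast] using
    congrArg (ZMod.castHom (dvd_refl p) R) (ZMod.pow_card (a : ZMod p))

theorem intCast_pow_div_two_eq_legendreSym (a : ℤ) : (a : R) ^ (p / 2) = legendreSym p a := by
  simpa using congrArg (ZMod.castHom (dvd_refl p) R) (legendreSym.eq_pow p a).symm

end CharP

theorem pow_char_eq_of_legendreSym_eq_neg_one {K : Type*} [CommRing K] [IsDomain K] {p : ℕ}
    [Fact p.Prime] [CharP K p] {A B : ℤ} {α β : K} (hsum : α + β = A) (hprod : α * β = B)
    (hd : legendreSym p (A ^ 2 - 4 * B) = -1) : α ^ p = β := by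
  have hp2 : p ≠ 2 := legendreSym.prime_ne_two_of_eq_neg_one hd
  have hsq : (α - β) ^ 2 = ((A ^ 2 - 4 * B : ℤ) : K) := by
    push_cast
    rw [← hsum, ← hprod]
    ring
  have hodd : Odd p := Nat.Prime.odd_of_ne_two Fact.out hp2
  have hdiff : α ^ p - β ^ p = β - α := by
    rw [← sub_pow_char, ← Nat.two_mul_div_two_add_one_of_odd hodd, pow_succ, pow_mul,
      hsq, intCast_pow_div_two_eq_legendreSym, hd]
    push_cast
    ring
  have hadd : α ^ p + β ^ p = α + β := by
    rw [← add_pow_char, hsum, intCast_pow_char]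
  have htwo : (2 : K) ≠ 0 := Ring.two_ne_zero (by rwa [ringChar.eq K p])
  exact mul_left_cancel₀ htwo (by linear_combination hadd + hdiff)

theorem pow_two_mul_ne_neg_one {M : Type*} [Monoid M] [HasDistribNeg M] (hM : (-1 : M) ≠ 1)
    {α : M} {m : ℕ} (hm : Odd m) (hα : α ^ (2 * m) = 1) (k : ℕ) : α ^ (2 * k) ≠ -1 := by
  intro hk
  apply hM
  calc (-1 : M) = (α ^ (2 * k)) ^ m := by rw [hk, hm.neg_one_pow]
    _ = (α ^ (2 * m)) ^ k := by rw [← pow_mul, ← pow_mul, mul_right_comm]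
    _ = 1 := by rw [hα, one_pow]

theorem lucasV_not_dvd (p : ℕ) [Fact p.Prime] (hp4 : p % 4 = 1) (b : ℤ)
    (hb : legendreSym p (b ^ 2 - 4) = -1) :
    ∀ k : ℕ, 0 < k → ¬ (p : ℤ) ∣ lucasV (-b) 1 k := by
  intro k _ hdvd
  obtain ⟨α, β, hsum, hprod⟩ : ∃ α β : AlgebraicClosure (ZMod p),
      α + β = (-b : ℤ) ∧ α * β = (1 : ℤ) := IsAlgClosed.exists_add_eq_and_mul_eq _ _
  have hunit : α * β = 1 := by exact_mod_cast hprod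
  have hfrob : α ^ p = β :=
    pow_char_eq_of_legendreSym_eq_neg_one hsum hprod (by rwa [neg_sq, mul_one])
  have hperiod : α ^ (2 * ((p + 1) / 2)) = 1 := by
    rw [Nat.mul_div_cancel' (by omega), pow_succ, hfrob, mul_comm, hunit]
  have hvk : α ^ k + β ^ k = 0 := by
    rwa [← lucasV_intCast_eq_pow_add_pow hsum hprod, CharP.intCast_eq_zero_iff _ p]
  have hsq : α ^ (2 * k) = -1 := by
    have hunit_pow : α ^ k * β ^ k = 1 := by rw [← mul_pow, hunit, one_pow]
    linear_combination α ^ k * hvk - hunit_pow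
  have hchar : (-1 : AlgebraicClosure (ZMod p)) ≠ 1 := by
    rw [Ne, neg_one_eq_one_iff, ringChar.eq _ p]
    exact legendreSym.prime_ne_two_of_eq_neg_one hb
  exact pow_two_mul_ne_neg_one hchar ⟨p / 4, by omega⟩ hperiod k hsq
end

section
/- Let p be an odd prime with Legendre symbol (−7/p) = −1, and suppose that p ≡ 3 (mod 8) or p ≡ 7 (mod 16). Then v_{2k}(−3,4) ≢ 0 (mod p) for every positive integer k. -/
open Polynomial

/-!
Let `π` be a root of `X² - X + 2`, whose discriminant is `-7`, in a field of characteristic `p`.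
Then `π(1 - π) = 2` and `v_n(-3, 4) = π^{2n} + (1 - π)^{2n}`. Since `-7` is not a square mod `p`,
Euler's criterion gives `(2π - 1)^p = -(2π - 1)`, i.e. Frobenius swaps `π` and `1 - π`. Hence
`v_{2k} = π^{4k} (1 + u^{4k})` with `u = π^{p-1}`, and `u^{(p+1)/2} = (π^{p+1})^{p/2} = 2^{p/2}`.
Under either congruence condition on `p` this forces `u^{4m} = 1` for some odd `m`
(Fermat when `p ≡ 3 mod 8`, Euler's criterion for the square `2` when `p ≡ 7 mod 16`),
which is incompatible with `u^{4k} = -1`.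
-/

theorem lucasV_eq_pow_add_pow {R : Type*} [CommRing R] {A B : ℤ} {a b : R}
    (hA : a + b = A) (hB : a * b = B) : ∀ n, (lucasV A B n : R) = a ^ n + b ^ n
  | 0 => by norm_num [lucasV]
  | 1 => by simp [lucasV, hA]
  | n + 2 => by
    rw [lucasV, Int.cast_sub, Int.cast_mul, Int.cast_mul, lucasV_eq_pow_add_pow hA hB n,
      lucasV_eq_pow_add_pow hA hB (n + 1), ← hA, ← hB]
    ring

theorem lucasV_neg_three_four_eq {R : Type*} [CommRing R] {π : R} (hπ : π * (1 - π) = 2)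
    (n : ℕ) : (lucasV (-3) 4 n : R) = π ^ (2 * n) + (1 - π) ^ (2 * n) := by
  rw [pow_mul, pow_mul]
  refine lucasV_eq_pow_add_pow ?_ ?_ n
  · push_cast
    linear_combination (-2) * hπ
  · push_cast
    linear_combination (π * (1 - π) + 2) * hπ

theorem exists_mul_one_sub_eq_two {K : Type*} [Field K] [IsAlgClosed K] (h2 : (2 : K) ≠ 0) :
    ∃ π : K, π * (1 - π) = 2 := by
  obtain ⟨s, hs⟩ := IsAlgClosed.exists_eq_mul_self (-7 : K)
  refine ⟨(1 + s) / 2, ?_⟩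
  field_simp
  linear_combination hs

theorem pow_char_eq_neg_of_sq_eq {K : Type*} [CommRing K] {p : ℕ} [Fact p.Prime] [CharP K p]
    (hp : p ≠ 2) {a : ℤ} (ha : legendreSym p a = -1) {s : K} (hs : s ^ 2 = a) : s ^ p = -s := by
  have hodd : 2 * (p / 2) + 1 = p :=
    Nat.two_mul_div_two_add_one_of_odd ((Fact.out : p.Prime).odd_of_ne_two hp)
  have heuler : (a : K) ^ (p / 2) = -1 := by
    simpa [ha] using (congrArg (ZMod.castHom (dvd_refl p) K) (legendreSym.eq_pow p a)).symm
  rw [← hodd, pow_succ, pow_mul, hs, heuler, neg_one_mul]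

theorem pow_char_eq_one_sub {K : Type*} [Field K] {p : ℕ} [Fact p.Prime] [CharP K p]
    (hp : p ≠ 2) (h7 : legendreSym p (-7) = -1) {π : K} (hπ : π * (1 - π) = 2) :
    π ^ p = 1 - π := by
  have hs : (π - (1 - π)) ^ 2 = ((-7 : ℤ) : K) := by
    push_cast
    linear_combination (-4) * hπ
  have hconj := pow_char_eq_neg_of_sq_eq hp h7 hs
  rw [sub_pow_char, sub_pow_char, one_pow] at hconj
  have h2 : (2 : K) ≠ 0 := Ring.two_ne_zero (by rwa [ringChar.eq K p])
  exact mul_left_cancel₀ h2 (by linear_combination hconj)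

theorem pow_sub_one_pow_add_one_div_two {M : Type*} [Monoid M] {p : ℕ} (hp : Odd p) (x : M) :
    (x ^ (p - 1)) ^ ((p + 1) / 2) = (x ^ (p + 1)) ^ (p / 2) := by
  obtain ⟨r, rfl⟩ := hp
  rw [← pow_mul, ← pow_mul]
  congr 1
  rw [show (2 * r + 1 + 1) / 2 = r + 1 by omega, show (2 * r + 1) / 2 = r by omega]
  simp only [Nat.add_sub_cancel]
  ring

theorem exists_odd_pow_four_mul_eq_one {K : Type*} [Ring K] {p : ℕ} [Fact p.Prime] [CharP K p]
    (hp : p % 8 = 3 ∨ p % 16 = 7) {u : K} (hu : u ^ ((p + 1) / 2) = 2 ^ (p / 2)) :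
    ∃ m, Odd m ∧ u ^ (4 * m) = 1 := by
  have h2 : (2 : ZMod p) ≠ 0 := by
    rw [← Nat.cast_ofNat, Ne, ZMod.natCast_eq_zero_iff]
    exact fun h ↦ by have := Nat.le_of_dvd two_pos h; omega
  have hcast : ∀ e, (2 : ZMod p) ^ e = 1 → (2 : K) ^ e = 1 := fun e he ↦ by
    simpa only [map_pow, map_ofNat, map_one] using congrArg (ZMod.castHom (dvd_refl p) K) he
  rcases hp with hp | hp
  · refine ⟨(p + 1) / 4, Nat.odd_iff.mpr (by omega), ?_⟩
    rw [show 4 * ((p + 1) / 4) = (p + 1) / 2 * 2 by omega, pow_mul, hu, ← pow_mul,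
      show p / 2 * 2 = p - 1 by omega]
    exact hcast _ (ZMod.pow_card_sub_one_eq_one h2)
  · refine ⟨(p + 1) / 8, Nat.odd_iff.mpr (by omega), ?_⟩
    rw [show 4 * ((p + 1) / 8) = (p + 1) / 2 by omega, hu]
    have hsq : IsSquare (2 : ZMod p) := (ZMod.exists_sq_eq_two_iff (by omega)).mpr (by omega)
    exact hcast _ ((ZMod.euler_criterion p h2).mp hsq)

theorem neg_one_eq_one_of_pow_eq_neg_one_of_pow_eq_one {M : Type*} [Monoid M] [HasDistribNeg M]
    {u : M} {n k m : ℕ} (hk : u ^ (n * k) = -1) (hm : u ^ (n * m) = 1) (hodd : Odd m) :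
    (-1 : M) = 1 :=
  calc (-1 : M) = (u ^ (n * k)) ^ m := by rw [hk, hodd.neg_one_pow]
    _ = (u ^ (n * m)) ^ k := by rw [← pow_mul, ← pow_mul, mul_right_comm]
    _ = 1 := by rw [hm, one_pow]

theorem lucasV_neg_three_four_not_dvd_general (p : ℕ) [Fact p.Prime]
    (h7 : legendreSym p (-7) = -1) (hp : p % 8 = 3 ∨ p % 16 = 7) :
    ∀ k : ℕ, 0 < k → ¬ (p : ℤ) ∣ lucasV (-3) 4 (2 * k) := by
  intro k _ hdvd
  have hp2 : p ≠ 2 := by omega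
  let K := AlgebraicClosure (ZMod p)
  have hK : ringChar K ≠ 2 := by rwa [ringChar.eq K p]
  have h2 : (2 : K) ≠ 0 := Ring.two_ne_zero hK
  obtain ⟨π, hπ⟩ := exists_mul_one_sub_eq_two h2
  have hfrob : π ^ p = 1 - π := pow_char_eq_one_sub hp2 h7 hπ
  have hπ0 : π ≠ 0 := left_ne_zero_of_mul (hπ ▸ h2)
  have hv : π ^ (4 * k) * (1 + (π ^ (p - 1)) ^ (4 * k)) = 0 := by
    rw [← (CharP.intCast_eq_zero_iff K p _).mpr hdvd, lucasV_neg_three_four_eq hπ, ← hfrob,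
      ← pow_sub_one_mul (Fact.out : p.Prime).ne_zero, show 2 * (2 * k) = 4 * k by ring]
    ring
  have hu : (π ^ (p - 1)) ^ (4 * k) = -1 :=
    eq_neg_of_add_eq_zero_right ((mul_eq_zero.mp hv).resolve_left (pow_ne_zero _ hπ0))
  have hnorm : (π ^ (p - 1)) ^ ((p + 1) / 2) = 2 ^ (p / 2) := by
    rw [pow_sub_one_pow_add_one_div_two ((Fact.out : p.Prime).odd_of_ne_two hp2), pow_succ,
      hfrob, mul_comm, hπ]
  obtain ⟨m, hm, hum⟩ := exists_odd_pow_four_mul_eq_one hp hnorm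
  exact Ring.neg_one_ne_one_of_char_ne_two hK
    (neg_one_eq_one_of_pow_eq_neg_one_of_pow_eq_one hu hum hm)

theorem lucasV_neg_three_four_not_dvd (p : ℕ) [Fact p.Prime] (hodd : p % 2 = 1)
    (h7 : legendreSym p (-7) = -1) (hp : p % 8 = 3 ∨ p % 16 = 7) :
    ∀ k : ℕ, 0 < k → ¬ (p : ℤ) ∣ lucasV (-3) 4 (2 * k) :=
  lucasV_neg_three_four_not_dvd_general p h7 hp
end

section
/- Let p be an odd prime, let b be an integer, and let k be a natural number. Then v_k(−b,1) ≡ 0 (mod p) if and only if, in the quotient ring ℤ[x]/(x²+bx+1) with α the image of x, one has α^(2k) ≡ −1 (mod p), i.e., α^(2k) + 1 lies in the ideal generated by p. -/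
open Polynomial

/-!
In `ℤ[x]/(x² + b x + 1)` the class `α` of `x` is a unit with `α + α⁻¹ = -b`, so
`v_k(-b, 1) = α^k + α^(-k)` and `α^k v_k = α^(2k) + 1`. Hence `α^(2k) + 1 ∈ (p)` iff
`v_k ∈ (p)` there, and since the quotient is free over `ℤ` on `1, α`, an integer is divisible
by `p` in it iff it is in `ℤ`.
-/

/-- `v_k = a^k + (B/a)^k` for a root `a` of `X² − A X + B`, multiplied through by `a^k`. -/
theorem pow_mul_lucasV {S : Type*} [CommRing S] {A B : ℤ} {a : S}
    (ha : a ^ 2 - A * a + B = 0) (k : ℕ) :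
    a ^ k * lucasV A B k = a ^ (2 * k) + (B : S) ^ k := by
  induction k using Nat.twoStepInduction with
  | zero => simp only [lucasV, pow_zero, mul_zero, Int.cast_ofNat]; ring
  | one => simp only [lucasV, pow_one, mul_one]; linear_combination -ha
  | more n ih₀ ih₁ =>
    simp only [lucasV, Int.cast_sub, Int.cast_mul]
    linear_combination (A * a) * ih₁ - (B * a ^ 2) * ih₀ - (a ^ (2 * n + 2) + B ^ (n + 1)) * ha

/-- Since `f` is monic of positive degree, `C r = C m * g + f * q` reduces modulo `f` to
`C r = C m * (g %ₘ f)`, and comparing constant terms gives `m ∣ r`. -/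
theorem Polynomial.Monic.mk_C_mem_span_mk_C_iff {R : Type*} [CommRing R] {f : R[X]}
    (hf : f.Monic) (hdeg : 0 < f.degree) (r m : R) :
    Ideal.Quotient.mk (Ideal.span {f}) (C r) ∈
        Ideal.span {Ideal.Quotient.mk (Ideal.span {f}) (C m)} ↔ m ∣ r := by
  have : Nontrivial R := nontrivial_iff.mp (nontrivial_of_ne f 0 (ne_zero_of_degree_gt hdeg))
  constructor
  · intro hr
    obtain ⟨g', hg'⟩ := Ideal.mem_span_singleton'.mp hr
    obtain ⟨g, rfl⟩ := Ideal.Quotient.mk_surjective g'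
    have hdvd : f ∣ C r - C m * g := by
      rw [← Ideal.Quotient.eq_zero_iff_dvd, map_sub, map_mul, ← hg']
      ring
    have hmod : C r = C m * (g %ₘ f) := by
      have h := (modByMonic_eq_zero_iff_dvd hf).mpr hdvd
      rwa [← smul_eq_C_mul, sub_modByMonic, smul_modByMonic,
        (modByMonic_eq_self_iff hf).mpr (degree_C_le.trans_lt hdeg), sub_eq_zero,
        smul_eq_C_mul] at h
    exact ⟨(g %ₘ f).coeff 0, by simpa using congrArg (coeff · 0) hmod⟩
  · rintro ⟨c, rfl⟩
    exact Ideal.mem_span_singleton'.mpr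
      ⟨Ideal.Quotient.mk _ (C c), by rw [C_mul, map_mul, mul_comm]⟩

theorem lucasV_dvd_iff_general (p : ℕ) (b : ℤ) (k : ℕ) :
    (p : ℤ) ∣ lucasV (-b) 1 k ↔
      (Ideal.Quotient.mk (Ideal.span {(X : ℤ[X]) ^ 2 + C b * X + C 1}) X) ^ (2 * k) + 1
        ∈ Ideal.span {(p : ℤ[X] ⧸ Ideal.span {(X : ℤ[X]) ^ 2 + C b * X + C 1})} := by
  set f : ℤ[X] := X ^ 2 + C b * X + C 1
  set mk := Ideal.Quotient.mk (Ideal.span {f})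
  have hdeg : f.degree = 2 := by unfold f; compute_degree!
  have hmonic : f.Monic := by unfold f; monicity!
  have hroot : mk X ^ 2 + b * mk X + 1 = 0 := by
    have hC : mk (C b) = b := eq_intCast (mk.comp C) b
    have hf : mk (X ^ 2 + C b * X + C 1) = 0 := Ideal.Quotient.mk_singleton_self f
    simpa only [map_add, map_mul, map_pow, map_one, hC] using hf
  have hunit : IsUnit (mk X) := .of_mul_eq_one (-(mk X + b)) (by linear_combination -hroot)
  have hvk := pow_mul_lucasV (A := -b) (B := 1) (a := mk X)
    (by push_cast; linear_combination hroot) k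
  rw [Int.cast_one, one_pow] at hvk
  rw [← hvk, Ideal.unit_mul_mem_iff_mem _ (hunit.pow k), ← map_intCast mk,
    ← map_natCast mk, ← C_eq_intCast, ← C_eq_natCast, Int.cast_id,
    hmonic.mk_C_mem_span_mk_C_iff (by rw [hdeg]; decide)]

theorem lucasV_dvd_iff (p : ℕ) [Fact p.Prime] (hodd : p % 2 = 1) (b : ℤ) (k : ℕ) :
    (p : ℤ) ∣ lucasV (-b) 1 k ↔
      (Ideal.Quotient.mk (Ideal.span {(X : ℤ[X]) ^ 2 + C b * X + C 1}) X) ^ (2 * k) + 1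
        ∈ Ideal.span {(p : ℤ[X] ⧸ Ideal.span {(X : ℤ[X]) ^ 2 + C b * X + C 1})} :=
  lucasV_dvd_iff_general p b k
end

section
/- For any prime p with p ≡ 2 (mod 3), the Legendre symbol (D_p(1,1)/p) equals the Legendre symbol (−2/p). -/
open Polynomial

/-!
Modulo `p` the entries are `(i² + ij + j²)⁻¹ = i⁻² g(j/i)` with `g w = (1 + w + w²)⁻¹`. Since
`∏ i⁻² = 1` by Wilson, the determinant is that of the group matrix `(g(j/i))` of the cyclic
group `𝔽ₚˣ`, which the characters `w ↦ w^k` diagonalise: it is `∏ₖ ∑_w g(w) wᵏ`.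
Write `p = 3r + 2`. Then `w ↦ wʳ` permutes `𝔽ₚˣ`, and because `(wʳ)³ = w⁻¹` the function
`g(wʳ) = (wʳ - 1)/((wʳ)³ - 1)` is a geometric sum `∑_{i ≤ 2r} w⁻ⁱ`, corrected at `w = 1`.
Hence every eigenvalue is `2/3` or `-1/3`, the latter exactly `2r + 1` times, and
`D_p(1,1) ≡ (-1/3)^(2r+1) (2/3)^r = -2^r`, which is `-2` times a nonzero square.
-/

open Finset Matrix

theorem prod_range_sub_ite {R : Type*} [CommRing R] {m n : ℕ} (hmn : m ≤ n) (c : R) :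
    ∏ k ∈ range n, (c - if k < m then 1 else 0) = (c - 1) ^ m * c ^ (n - m) := by
  rw [← prod_range_mul_prod_Ico _ hmn]
  congr 1
  · rw [prod_congr rfl (g := fun _ => c - 1) fun k hk => by rw [if_pos (mem_range.mp hk)],
      prod_const, card_range]
  · rw [prod_congr rfl (g := fun _ => c) fun k hk => by
      rw [if_neg (by simp at hk; omega), sub_zero], prod_const, Nat.card_Ico]

section UnitsOfFiniteField

variable {K : Type*} [Field K] [Fintype K] {r : ℕ}

theorem pow_card_sub_two_eq_inv (hK : 2 < Fintype.card K) (a : K) :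
    a ^ (Fintype.card K - 2) = a⁻¹ := by
  rcases eq_or_ne a 0 with rfl | ha
  · rw [_root_.inv_zero, zero_pow (by omega)]
  · refine eq_inv_of_mul_eq_one_left ?_
    rw [← pow_succ, show Fintype.card K - 2 + 1 = Fintype.card K - 1 by omega,
      FiniteField.pow_card_sub_one_eq_one a ha]

theorem three_mul_two_mul_add_one_eq_neg_one (hq : Fintype.card K = 3 * r + 2) :
    (3 : K) * (2 * r + 1) = -1 := by
  have h := FiniteField.cast_card_eq_zero K
  rw [hq] at h
  push_cast at h
  linear_combination 2 * h

theorem three_ne_zero_of_card_eq (hq : Fintype.card K = 3 * r + 2) : (3 : K) ≠ 0 :=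
  left_ne_zero_of_mul <| by
    rw [three_mul_two_mul_add_one_eq_neg_one hq]
    exact neg_ne_zero.mpr one_ne_zero

variable [DecidableEq K]

theorem det_units_circulant (g : Kˣ → K) :
    (of fun u v : Kˣ => g (v / u)).det =
      ∏ k ∈ range (Fintype.card Kˣ), ∑ w : Kˣ, g w * (w : K) ^ k := by
  set n := Fintype.card Kˣ
  let e : Fin n ≃ Kˣ := (Fintype.equivFin Kˣ).symm
  have hV : (vandermonde fun i => (e i : K)).det ≠ 0 :=
    det_vandermonde_ne_zero_iff.mpr fun i j h => e.injective (Units.ext h)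
  have hNV : (of fun i j => g (e j / e i)) * vandermonde (fun i => (e i : K)) =
      vandermonde (fun i => (e i : K)) *
        diagonal fun k : Fin n => ∑ w : Kˣ, g w * (w : K) ^ (k : ℕ) := by
    ext i k
    rw [mul_diagonal, mul_apply, vandermonde_apply, mul_sum]
    simp only [of_apply, vandermonde_apply]
    rw [e.sum_comp fun v => g (v / e i) * (v : K) ^ (k : ℕ),
      ← Equiv.sum_comp (Equiv.mulLeft (e i))]
    refine sum_congr rfl fun w _ => ?_
    simp only [Equiv.coe_mulLeft, mul_div_cancel_left, Units.val_mul, mul_pow]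
    ring
  have hdet := congrArg det hNV
  rw [det_mul, det_mul, det_diagonal, mul_comm] at hdet
  rw [← Fin.prod_univ_eq_prod_range, ← mul_left_cancel₀ hV hdet]
  exact (det_submatrix_equiv_self e _).symm

theorem det_of_div_eq_det_of_div_pow (g : Kˣ → K) (hr : (Nat.card Kˣ).Coprime r) :
    (of fun u v : Kˣ => g (v / u)).det = (of fun u v : Kˣ => g ((v / u) ^ r)).det := by
  rw [← det_submatrix_equiv_self (powCoprime hr)]
  congr 1
  ext u v
  simp [div_pow]

theorem det_of_inv_sq_add_mul_add_sq_eq_det_of_div :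
    (of fun u v : Kˣ => ((u : K) ^ 2 + u * v + (v : K) ^ 2)⁻¹).det =
      (of fun u v : Kˣ => (1 + ((v / u : Kˣ) : K) + ((v / u : Kˣ) : K) ^ 2)⁻¹).det := by
  have hscale : (of fun u v : Kˣ => ((u : K) ^ 2 + u * v + (v : K) ^ 2)⁻¹) =
      of fun u v : Kˣ => (u : K)⁻¹ ^ 2 *
        of (fun u v : Kˣ => (1 + ((v / u : Kˣ) : K) + ((v / u : Kˣ) : K) ^ 2)⁻¹) u v := by
    ext u v
    have hu : (u : K) ≠ 0 := u.ne_zero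
    simp only [of_apply, Units.val_div_eq_div_val]
    field_simp
  have hwilson : ∏ u : Kˣ, (u : K)⁻¹ ^ 2 = 1 := by
    rw [prod_pow, prod_inv_distrib, ← Units.coe_prod, FiniteField.prod_univ_units_id_eq_neg_one]
    simp
  rw [hscale, det_mul_column, hwilson, one_mul]

theorem sum_units_pow_mul_inv_pow {k i : ℕ} (hk : k < Fintype.card Kˣ)
    (hi : i < Fintype.card Kˣ) :
    ∑ w : Kˣ, (w : K) ^ k * (w : K)⁻¹ ^ i = if k = i then -1 else 0 := by
  set n := Fintype.card Kˣ
  have hw (w : Kˣ) : (w : K) ^ k * (w : K)⁻¹ ^ i = (w : K) ^ (k + (n - i)) := by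
    have hn : (w : K) ^ (n - i) * (w : K) ^ i = 1 := by
      rw [← pow_add, Nat.sub_add_cancel hi.le, ← Units.val_pow_eq_pow_val, pow_card_eq_one,
        Units.val_one]
    rw [pow_add, inv_pow, ← eq_inv_of_mul_eq_one_left hn]
  simp_rw [hw]
  rw [FiniteField.sum_pow_units, ← Fintype.card_units]
  congr 1
  apply propext
  constructor
  · intro h
    have := Nat.eq_of_dvd_of_lt_two_mul (by omega) h (by omega)
    omega
  · rintro rfl
    rw [Nat.add_sub_cancel' hi.le]

theorem inv_one_add_pow_add_sq_pow (hq : Fintype.card K = 3 * r + 2) (w : Kˣ) :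
    (1 + (w : K) ^ r + ((w : K) ^ r) ^ 2)⁻¹ =
      ∑ i ∈ range (2 * r + 1), (w : K)⁻¹ ^ i + if w = 1 then 2 * 3⁻¹ else 0 := by
  split_ifs with hw1
  · subst hw1
    have h3ne := three_ne_zero_of_card_eq hq
    simp only [Units.val_one, one_pow, inv_one, sum_const, card_range, nsmul_eq_mul, mul_one]
    norm_num
    field_simp
    linear_combination -three_mul_two_mul_add_one_eq_neg_one hq
  · set x : K := (w : K)⁻¹
    have hx1 : x ≠ 1 := fun h => hw1 (Units.ext (by simpa [x] using congrArg (·⁻¹) h))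
    have hwn : (w : K) ^ (3 * r + 1) = 1 := by
      simpa [hq] using FiniteField.pow_card_sub_one_eq_one (w : K) w.ne_zero
    have hu : (w : K) ^ r = x ^ (2 * r + 1) := by
      rw [inv_pow]
      exact eq_inv_of_mul_eq_one_left (by rw [← pow_add, ← hwn]; ring_nf)
    have hu3 : (x ^ (2 * r + 1)) ^ 3 = x := by
      rw [← pow_mul, show (2 * r + 1) * 3 = (3 * r + 1) * 2 + 1 by ring, pow_add, pow_mul,
        inv_pow, hwn, inv_one, one_pow, one_mul, pow_one]
    have hcube :
        (1 + x ^ (2 * r + 1) + (x ^ (2 * r + 1)) ^ 2) * (x ^ (2 * r + 1) - 1) = x - 1 := by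
      linear_combination hu3
    have hne : 1 + x ^ (2 * r + 1) + (x ^ (2 * r + 1)) ^ 2 ≠ 0 :=
      left_ne_zero_of_mul (hcube ▸ sub_ne_zero.mpr hx1)
    rw [add_zero, hu, geom_sum_eq hx1, eq_div_iff (sub_ne_zero.mpr hx1), ← hcube,
      inv_mul_cancel_left₀ hne]

theorem sum_inv_one_add_pow_add_sq_pow_mul_pow {k : ℕ} (hq : Fintype.card K = 3 * r + 2)
    (hk : k < 3 * r + 1) :
    ∑ w : Kˣ, (1 + (w : K) ^ r + ((w : K) ^ r) ^ 2)⁻¹ * (w : K) ^ k =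
      2 * 3⁻¹ - if k < 2 * r + 1 then 1 else 0 := by
  have hn : Fintype.card Kˣ = 3 * r + 1 := by rw [Fintype.card_units, hq]; rfl
  have hchar : ∀ i ∈ range (2 * r + 1),
      ∑ w : Kˣ, (w : K)⁻¹ ^ i * (w : K) ^ k = if k = i then -1 else 0 := fun i hi => by
    simp_rw [mul_comm _ ((_ : K) ^ k)]
    exact sum_units_pow_mul_inv_pow (by omega) (by simp at hi; omega)
  simp_rw [inv_one_add_pow_add_sq_pow hq, add_mul, sum_add_distrib, sum_mul, ite_mul, zero_mul]
  rw [sum_comm, sum_ite_eq' univ (1 : Kˣ), if_pos (mem_univ _), Units.val_one, one_pow, mul_one,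
    sum_congr rfl hchar, sum_ite_eq]
  simp only [mem_range]
  split_ifs <;> ring

theorem det_of_inv_sq_add_mul_add_sq (hq : Fintype.card K = 3 * r + 2) :
    (of fun u v : Kˣ => ((u : K) ^ 2 + u * v + (v : K) ^ 2)⁻¹).det = -2 ^ r := by
  have hn : Fintype.card Kˣ = 3 * r + 1 := by rw [Fintype.card_units, hq]; rfl
  have hcop : (Nat.card Kˣ).Coprime r := by
    rw [Nat.card_eq_fintype_card, hn]
    simp
  have h3ne := three_ne_zero_of_card_eq hq
  have h3pow : (3 : K)⁻¹ ^ (3 * r + 1) = 1 := by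
    rw [inv_pow, show 3 * r + 1 = Fintype.card K - 1 by omega,
      FiniteField.pow_card_sub_one_eq_one (3 : K) h3ne, inv_one]
  rw [det_of_inv_sq_add_mul_add_sq_eq_det_of_div,
    det_of_div_eq_det_of_div_pow (fun w : Kˣ => (1 + (w : K) + (w : K) ^ 2)⁻¹) hcop,
    det_units_circulant fun w => (1 + ((w ^ r : Kˣ) : K) + ((w ^ r : Kˣ) : K) ^ 2)⁻¹, hn]
  simp only [Units.val_pow_eq_pow_val]
  rw [prod_congr rfl fun k hk => sum_inv_one_add_pow_add_sq_pow_mul_pow hq (mem_range.mp hk),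
    prod_range_sub_ite (by omega), show 3 * r + 1 - (2 * r + 1) = r by omega,
    show (2 : K) * 3⁻¹ - 1 = -3⁻¹ by field_simp; norm_num, Odd.neg_pow (by simp), mul_pow]
  linear_combination (-2 ^ r : K) * h3pow

end UnitsOfFiniteField

namespace ZMod

variable (p : ℕ) [Fact p.Prime]

noncomputable def finSubOneEquivUnits : Fin (p - 1) ≃ (ZMod p)ˣ :=
  have hne (i : Fin (p - 1)) : ((i : ℕ) + 1 : ZMod p) ≠ 0 := by
    rw [← Nat.cast_succ, Ne, natCast_eq_zero_iff]
    exact Nat.not_dvd_of_pos_of_lt i.val.succ_pos (by omega)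
  Equiv.ofBijective (fun i => Units.mk0 _ (hne i)) <| by
    rw [Fintype.bijective_iff_injective_and_card, card_units_eq_totient,
      Nat.totient_prime Fact.out, Fintype.card_fin]
    refine ⟨fun i j hij => ?_, rfl⟩
    rw [Units.mk0_inj, ← Nat.cast_succ, ← Nat.cast_succ, natCast_eq_natCast_iff',
      Nat.mod_eq_of_lt (by omega), Nat.mod_eq_of_lt (by omega)] at hij
    exact Fin.ext (Nat.succ_injective hij)

@[simp]
theorem val_finSubOneEquivUnits (i : Fin (p - 1)) :
    (finSubOneEquivUnits p i : ZMod p) = (i : ℕ) + 1 :=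
  rfl

end ZMod

theorem cast_Dp_one_one {p : ℕ} [Fact p.Prime] (hp : p ≠ 2) :
    ((Dp p 1 1 : ℤ) : ZMod p) =
      (of fun u v : (ZMod p)ˣ => ((u : ZMod p) ^ 2 + u * v + (v : ZMod p) ^ 2)⁻¹).det := by
  have hinv (a : ZMod p) : a ^ (p - 2) = a⁻¹ := by
    simpa only [ZMod.card] using pow_card_sub_two_eq_inv (by
      rw [ZMod.card]; exact lt_of_le_of_ne (Fact.out : p.Prime).two_le (Ne.symm hp)) a
  rw [← det_submatrix_equiv_self (ZMod.finSubOneEquivUnits p), Dp, Int.cast_det]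
  congr 1
  ext i j
  simp only [map_apply, of_apply, submatrix_apply, ZMod.val_finSubOneEquivUnits]
  push_cast
  rw [hinv]
  ring

theorem legendre_Dp_one_one (p : ℕ) [Fact p.Prime] (hodd : p % 2 = 1)
    (hp3 : p % 3 = 2) :
    legendreSym p (Dp p 1 1) = legendreSym p (-2) := by
  obtain ⟨a, ha⟩ : ∃ a, p = 6 * a + 5 := ⟨p / 6, by omega⟩
  have hD : ((Dp p 1 1 : ℤ) : ZMod p) = ((-2 * (2 ^ a) ^ 2 : ℤ) : ZMod p) := by
    rw [cast_Dp_one_one (by omega),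
      det_of_inv_sq_add_mul_add_sq (r := 2 * a + 1) (by rw [ZMod.card, ha]; ring)]
    push_cast
    ring
  have h2 : ((2 ^ a : ℤ) : ZMod p) ≠ 0 := by
    push_cast
    exact pow_ne_zero _ (Ring.two_ne_zero (by rw [ZMod.ringChar_zmod_n]; omega))
  rw [legendreSym.mod, (ZMod.intCast_eq_intCast_iff' _ _ _).mp hD, ← legendreSym.mod,
    legendreSym.mul, legendreSym.sq_one' p h2, mul_one]
end
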